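/- arXiv:1112.4923 — 2 statements merged into one kernel-verified Lean document; each statement's English description precedes it below -/
import Mathlib

section
/- Let X be a real Hilbert space, let m ≥ 2, let T_1, …, T_m : X → X be firmly nonexpansive mappings such that for each i, 0 belongs to the closure of the range of Id − T_i, and let λ_1, …, λ_m ∈ (0,1) with λ_1 + ⋯ + λ_m = 1. Define T : X^m → X^m by T(x_1, …, x_m) = (T_1 x_1, …, T_m x_m) and Q : X^m → X^m by Q(x_1, …, x_m) = (x̄, …, x̄) where x̄ = Σ_{i=1}^m λ_i x_i. Then the composition Q ∘ T is asymptotically regular on X^m. -/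
open Filter Topology RealInnerProductSpace

section Aux
variable {X : Type*} [NormedAddCommGroup X] [InnerProductSpace ℝ X]

/-- If `‖u‖² ≤ ⟪w,u⟫` then `‖u‖² + ‖w-u‖² ≤ ‖w‖²`. -/
lemma firm_key {u w : X} (h : ‖u‖ ^ 2 ≤ ⟪w, u⟫) :
    ‖u‖ ^ 2 + ‖w - u‖ ^ 2 ≤ ‖w‖ ^ 2 := by
  have e : ‖w - u‖ ^ 2 = ‖w‖ ^ 2 - 2 * ⟪w, u⟫ + ‖u‖ ^ 2 := norm_sub_sq_real w u
  linarith

/-- Firm nonexpansiveness of the complement: `‖w-u‖² ≤ ⟪w-u, w⟫`. -/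
lemma firm_compl {u w : X} (h : ‖u‖ ^ 2 ≤ ⟪w, u⟫) :
    ‖w - u‖ ^ 2 ≤ ⟪w - u, w⟫ := by
  have e : ‖w - u‖ ^ 2 = ‖w‖ ^ 2 - 2 * ⟪w, u⟫ + ‖u‖ ^ 2 := norm_sub_sq_real w u
  have e2 : ⟪w - u, w⟫ = ‖w‖ ^ 2 - ⟪w, u⟫ := by
    rw [inner_sub_left, real_inner_self_eq_norm_sq, real_inner_comm]
  linarith

/-- Nonexpansiveness from the firm inequality. -/
lemma ne_of_firm {u w : X} (h : ‖u‖ ^ 2 ≤ ⟪w, u⟫) : ‖u‖ ≤ ‖w‖ := by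
  have h2 : ⟪w, u⟫ ≤ ‖w‖ * ‖u‖ := real_inner_le_norm w u
  nlinarith [norm_nonneg u, norm_nonneg w]

end Aux

set_option maxHeartbeats 1600000 in
theorem Q_comp_T_asymptotically_regular
    {X : Type*} [NormedAddCommGroup X] [InnerProductSpace ℝ X] [CompleteSpace X]
    {m : ℕ} (hm : 2 ≤ m) (T : Fin m → X → X)
    (hfirm : ∀ i : Fin m, ∀ x y : X, ‖T i x - T i y‖ ^ 2 ≤ ⟪x - y, T i x - T i y⟫)
    (h0 : ∀ i : Fin m, (0 : X) ∈ closure (Set.range fun x : X => x - T i x))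
    (lam : Fin m → ℝ) (hlam : ∀ i, lam i ∈ Set.Ioo (0 : ℝ) 1) (hsum : ∑ i, lam i = 1)
    (Tb Q : PiLp 2 (fun _ : Fin m => X) → PiLp 2 (fun _ : Fin m => X))
    (hTb : ∀ x : PiLp 2 (fun _ : Fin m => X), ∀ i : Fin m, Tb x i = T i (x i))
    (hQ : ∀ x : PiLp 2 (fun _ : Fin m => X), ∀ i : Fin m, Q x i = ∑ j, lam j • x j) :
    ∀ x : PiLp 2 (fun _ : Fin m => X),
      Tendsto (fun n : ℕ => (Q ∘ Tb)^[n] x - (Q ∘ Tb)^[n + 1] x) atTop (𝓝 0) := by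
  have hm0 : 0 < m := lt_of_lt_of_le two_pos hm
  haveI : Nonempty (Fin m) := ⟨⟨0, hm0⟩⟩
  haveI : Nonempty X := ⟨0⟩
  have hlam0 : ∀ i, 0 < lam i := fun i => (hlam i).1
  obtain ⟨R, hRdef⟩ : ∃ R : X → X, ∀ y, R y = ∑ i, lam i • T i y := ⟨_, fun _ => rfl⟩
  -- R is firmly nonexpansive
  have hRfirm : ∀ a b : X, ‖R a - R b‖ ^ 2 ≤ ⟪a - b, R a - R b⟫ := by
    intro a b
    -- reflection argument
    have hrefl : ‖(2:ℝ) • (R a - R b) - (a - b)‖ ≤ ‖a - b‖ := by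
      have hRsub : R a - R b = ∑ i, lam i • (T i a - T i b) := by
        rw [hRdef a, hRdef b]
        simp only [smul_sub, Finset.sum_sub_distrib]
      have e1 : (2:ℝ) • (R a - R b) - (a - b)
          = ∑ i, lam i • ((2:ℝ) • (T i a - T i b) - (a - b)) := by
        have e2 : ∀ i : Fin m, lam i • ((2:ℝ) • (T i a - T i b) - (a - b))
            = (2:ℝ) • (lam i • (T i a - T i b)) - lam i • (a - b) := by
          intro i; rw [smul_sub, smul_comm]
        rw [Finset.sum_congr rfl (fun i _ => e2 i), Finset.sum_sub_distrib, ← Finset.smul_sum,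
          ← Finset.sum_smul, hsum, one_smul, hRsub]
      rw [e1]
      calc ‖∑ i, lam i • ((2:ℝ) • (T i a - T i b) - (a - b))‖
          ≤ ∑ i, ‖lam i • ((2:ℝ) • (T i a - T i b) - (a - b))‖ := norm_sum_le _ _
        _ ≤ ∑ i, lam i * ‖a - b‖ := by
            apply Finset.sum_le_sum
            intro i _
            rw [norm_smul, Real.norm_eq_abs, abs_of_pos (hlam0 i)]
            apply mul_le_mul_of_nonneg_left _ (hlam0 i).le
            -- reflection of each T i is nonexpansive
            have h := hfirm i a b
            have e : ‖(2:ℝ) • (T i a - T i b) - (a - b)‖ ^ 2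
                = 4 * ‖T i a - T i b‖ ^ 2 - 4 * ⟪a - b, T i a - T i b⟫ + ‖a - b‖ ^ 2 := by
              rw [norm_sub_sq_real, norm_smul, real_inner_smul_left, real_inner_comm]
              simp [Real.norm_eq_abs]
              ring
            nlinarith [norm_nonneg ((2:ℝ) • (T i a - T i b) - (a - b)), norm_nonneg (a - b)]
        _ = ‖a - b‖ := by rw [← Finset.sum_mul, hsum, one_mul]
    have e : ‖(2:ℝ) • (R a - R b) - (a - b)‖ ^ 2
        = 4 * ‖R a - R b‖ ^ 2 - 4 * ⟪a - b, R a - R b⟫ + ‖a - b‖ ^ 2 := by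
      rw [norm_sub_sq_real, norm_smul, real_inner_smul_left, real_inner_comm]
      simp [Real.norm_eq_abs]
      ring
    nlinarith [norm_nonneg ((2:ℝ) • (R a - R b) - (a - b)), norm_nonneg (a - b),
      sq_nonneg (‖(2:ℝ) • (R a - R b) - (a - b)‖)]
  have hRne : ∀ a b : X, ‖R a - R b‖ ≤ ‖a - b‖ := fun a b => ne_of_firm (hRfirm a b)
  -- Step: inf displacement of R is zero
  have hinf : ∀ ε > (0:ℝ), ∃ y : X, ‖y - R y‖ < ε := by
    intro ε hε
    set ε' : ℝ := ε / 4 with hε'def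
    have hε'0 : 0 < ε' := by positivity
    clear_value ε'
    have hx : ∀ i, ∃ xi : X, ‖xi - T i xi‖ ≤ ε' := by
      intro i
      have h := h0 i
      rw [Metric.mem_closure_iff] at h
      obtain ⟨w, hwmem, hw⟩ := h ε' hε'0
      obtain ⟨xi, rfl⟩ := hwmem
      exact ⟨xi, by rw [dist_eq_norm, zero_sub, norm_neg] at hw; exact hw.le⟩
    choose xp hxp using hx
    set M : ℝ := Finset.univ.sup' Finset.univ_nonempty (fun i => ‖xp i‖) with hMdef
    have hMi : ∀ i, ‖xp i‖ ≤ M := fun i => Finset.le_sup' (fun i => ‖xp i‖) (Finset.mem_univ i)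
    have hM0 : 0 ≤ M := le_trans (norm_nonneg _) (hMi (Classical.arbitrary _))
    clear_value M
    set K : ℝ := 2 * ε' * M + M ^ 2 / 4 with hKdef
    have hK0 : 0 ≤ K := by
      rw [hKdef]
      have h1 : 0 ≤ 2 * ε' * M := mul_nonneg (mul_nonneg (by norm_num) hε'0.le) hM0
      have h2 : 0 ≤ M ^ 2 / 4 := div_nonneg (sq_nonneg M) (by norm_num)
      linarith
    clear_value K
    set t : ℝ := (ε / 2) ^ 2 / (K + 1) with htdef
    have ht0 : 0 < t := by
      rw [htdef]
      exact div_pos (by positivity) (by linarith)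
    have htK : Real.sqrt (t * K) < ε / 2 := by
      have h1 : t * K < (ε / 2) ^ 2 := by
        rw [htdef, div_mul_eq_mul_div, div_lt_iff₀ (by linarith)]
        nlinarith [sq_nonneg (ε/2)]
      calc Real.sqrt (t * K) < Real.sqrt ((ε/2)^2) := by
            apply Real.sqrt_lt_sqrt (mul_nonneg ht0.le hK0) h1
        _ = ε / 2 := Real.sqrt_sq (by positivity)
    clear_value t
    -- fixed point of y ↦ (1/(1+t)) • R y
    set c : NNReal := ⟨1 / (1 + t), div_nonneg zero_le_one (by linarith)⟩ with hcdef
    set f : X → X := fun y => (1 / (1 + t)) • R y with hfdef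
    have hc1 : c < 1 := by
      rw [← NNReal.coe_lt_coe]
      show 1 / (1 + t) < 1
      rw [div_lt_one (by linarith)]
      linarith
    have hLip : LipschitzWith c f := by
      apply LipschitzWith.of_dist_le_mul
      intro a b
      show dist ((1 / (1 + t)) • R a) ((1 / (1 + t)) • R b) ≤ (1 / (1 + t)) * dist a b
      rw [dist_eq_norm, dist_eq_norm, ← smul_sub, norm_smul, Real.norm_eq_abs,
        abs_of_pos (div_pos one_pos (by linarith) : (0:ℝ) < 1 / (1 + t))]
      exact mul_le_mul_of_nonneg_left (hRne a b) (div_nonneg zero_le_one (by linarith))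
    have hcontr : ContractingWith c f := ⟨hc1, hLip⟩
    obtain ⟨y, hyfix⟩ : ∃ y : X, f y = y :=
      ⟨hcontr.fixedPoint f, hcontr.fixedPoint_isFixedPt⟩
    have hyR : R y = (1 + t) • y := by
      simp only [hfdef] at hyfix
      have h2 := congrArg (fun v => (1 + t) • v) hyfix
      simp only [smul_smul] at h2
      rw [mul_one_div, div_self (by linarith : (1:ℝ) + t ≠ 0), one_smul] at h2
      rw [h2]
    clear hyfix hcontr hLip hc1
    clear_value c f
    clear hcdef hfdef c f
    have hyd : y - R y = -(t • y) := by
      rw [hyR, add_smul, one_smul]; abel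
    -- key per-coordinate estimate
    have hkey : ∀ i, -⟪y - T i y, y⟫ ≤ M ^ 2 / 4 + 2 * ε' * M + ε' * ‖y‖ := by
      intro i
      have h1 : ‖T i y - T i (xp i)‖ ^ 2 ≤ ⟪y - xp i, T i y - T i (xp i)⟫ := hfirm i y (xp i)
      have h2 : ‖(y - xp i) - (T i y - T i (xp i))‖ ^ 2
          ≤ ⟪(y - xp i) - (T i y - T i (xp i)), y - xp i⟫ := firm_compl h1
      set A : X := y - T i y with hAdef
      set a : X := xp i - T i (xp i) with hadef
      have hwa : (y - xp i) - (T i y - T i (xp i)) = A - a := by rw [hAdef, hadef]; abel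
      rw [hwa] at h2
      have he : ⟪A - a, y - xp i⟫ = ⟪A, y⟫ - ⟪A, xp i⟫ - ⟪a, y⟫ + ⟪a, xp i⟫ := by
        rw [inner_sub_left, inner_sub_right, inner_sub_right]; ring
      rw [he] at h2
      have ha : ‖a‖ ≤ ε' := hxp i
      clear_value A a
      set cc : ℝ := ‖A - a‖ with hccdef
      clear_value cc
      have hcc0 : 0 ≤ cc := by rw [hccdef]; exact norm_nonneg _
      have hA : ‖A‖ ≤ cc + ε' := by
        have h3 := norm_le_norm_add_norm_sub' A a
        rw [hccdef]; linarith
      have hb1 : -⟪A, xp i⟫ ≤ (cc + ε') * M := by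
        calc -⟪A, xp i⟫ ≤ |⟪A, xp i⟫| := neg_le_abs _
          _ ≤ ‖A‖ * ‖xp i‖ := abs_real_inner_le_norm A (xp i)
          _ ≤ (cc + ε') * M := by
              apply mul_le_mul hA (hMi i) (norm_nonneg _) (by linarith)
      have hb2 : -⟪a, y⟫ ≤ ε' * ‖y‖ := by
        calc -⟪a, y⟫ ≤ |⟪a, y⟫| := neg_le_abs _
          _ ≤ ‖a‖ * ‖y‖ := abs_real_inner_le_norm a y
          _ ≤ ε' * ‖y‖ := mul_le_mul_of_nonneg_right ha (norm_nonneg _)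
      have hb3 : ⟪a, xp i⟫ ≤ ε' * M := by
        calc ⟪a, xp i⟫ ≤ |⟪a, xp i⟫| := le_abs_self _
          _ ≤ ‖a‖ * ‖xp i‖ := abs_real_inner_le_norm a (xp i)
          _ ≤ ε' * M := mul_le_mul ha (hMi i) (norm_nonneg _) hε'0.le
      linarith [h2, hb1, hb2, hb3, sq_nonneg (cc - M / 2)]
    -- sum the estimates
    have hsum2 : y - R y = ∑ i, lam i • (y - T i y) := by
      rw [hRdef y]
      simp only [smul_sub]
      rw [Finset.sum_sub_distrib, ← Finset.sum_smul, hsum, one_smul]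
    have hsum3 : -⟪y - R y, y⟫ ≤ K + ε' * ‖y‖ := by
      rw [hsum2, sum_inner, ← Finset.sum_neg_distrib]
      calc ∑ i, -⟪lam i • (y - T i y), y⟫
          ≤ ∑ i, lam i * (M ^ 2 / 4 + 2 * ε' * M + ε' * ‖y‖) := by
            apply Finset.sum_le_sum
            intro i _
            rw [real_inner_smul_left, ← mul_neg]
            exact mul_le_mul_of_nonneg_left (hkey i) (hlam0 i).le
        _ = K + ε' * ‖y‖ := by rw [← Finset.sum_mul, hsum, hKdef]; ring
    have hip : -⟪y - R y, y⟫ = t * ‖y‖ ^ 2 := by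
      rw [hyd, inner_neg_left, real_inner_smul_left, real_inner_self_eq_norm_sq, neg_neg]
    have hty : t * ‖y‖ ^ 2 ≤ K + ε' * ‖y‖ := by rw [← hip]; exact hsum3
    have hnd : ‖y - R y‖ = t * ‖y‖ := by
      rw [hyd, norm_neg, norm_smul, Real.norm_eq_abs, abs_of_pos ht0]
    set δ : ℝ := t * ‖y‖ with hδdef
    clear_value δ
    have hδ0 : 0 ≤ δ := by rw [hδdef]; exact mul_nonneg ht0.le (norm_nonneg y)
    have hδ2 : δ ^ 2 ≤ t * K + ε' * δ := by
      have : δ ^ 2 = t * (t * ‖y‖ ^ 2) := by rw [hδdef]; ring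
      rw [this]
      calc t * (t * ‖y‖ ^ 2) ≤ t * (K + ε' * ‖y‖) :=
            mul_le_mul_of_nonneg_left hty ht0.le
        _ = t * K + ε' * δ := by rw [hδdef]; ring
    have hδle : δ ≤ ε' + Real.sqrt (t * K) := by
      by_contra hcon
      push_neg at hcon
      have hr0 : 0 ≤ Real.sqrt (t * K) := Real.sqrt_nonneg _
      have hr2 : Real.sqrt (t * K) ^ 2 = t * K := Real.sq_sqrt (mul_nonneg ht0.le hK0)
      nlinarith
    refine ⟨y, ?_⟩
    rw [hnd]
    calc δ ≤ ε' + Real.sqrt (t * K) := hδle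
      _ < ε / 4 + ε / 2 := by rw [hε'def]; linarith
      _ < ε := by linarith
  -- Step: asymptotic regularity of R
  have hasym : ∀ z : X, Tendsto (fun n : ℕ => R^[n] z - R^[n+1] z) atTop (𝓝 0) := by
    intro z
    set d : ℕ → X := fun n => R^[n] z - R^[n+1] z with hddef
    have hdn : ∀ n, d n = R^[n] z - R^[n+1] z := fun n => by rw [hddef]
    clear_value d
    have hkey2 : ∀ a b : X, ‖R a - R b‖ ^ 2 + ‖(a - R a) - (b - R b)‖ ^ 2 ≤ ‖a - b‖ ^ 2 := by
      intro a b
      have h := firm_key (hRfirm a b)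
      have e : (a - b) - (R a - R b) = (a - R a) - (b - R b) := by abel
      rw [e] at h
      linarith
    have hdanti : ∀ n, ‖d (n + 1)‖ ≤ ‖d n‖ := by
      intro n
      have h := hkey2 (R^[n] z) (R^[n+1] z)
      have e1 : R (R^[n] z) = R^[n+1] z := (Function.iterate_succ_apply' R n z).symm
      have e2 : R (R^[n+1] z) = R^[n+2] z := (Function.iterate_succ_apply' R (n+1) z).symm
      rw [e1, e2] at h
      rw [hdn n, hdn (n+1)]
      nlinarith [sq_nonneg ‖(R^[n] z - R^[n+1] z) - (R^[n+1] z - R^[n+2] z)‖,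
        norm_nonneg (R^[n+1] z - R^[n+2] z), norm_nonneg (R^[n] z - R^[n+1] z)]
    have hdanti' : Antitone fun n => ‖d n‖ := antitone_nat_of_succ_le hdanti
    have hsmall : ∀ ε > (0:ℝ), ∃ n, ‖d n‖ < ε := by
      intro ε hε
      obtain ⟨y, hy⟩ := hinf (ε / 2) (by positivity)
      set e : ℕ → X := fun n => R^[n] y - R^[n+1] y with hedef
      have hen : ∀ n, e n = R^[n] y - R^[n+1] y := fun n => by rw [hedef]
      clear_value e
      have he : ∀ n, ‖e n‖ ≤ ‖y - R y‖ := by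
        intro n
        induction n with
        | zero => rw [hen 0]; simp
        | succ n ih =>
          refine le_trans ?_ ih
          have e1 : e (n+1) = R (R^[n] y) - R (R^[n+1] y) := by
            rw [hen (n+1)]
            simp only [Function.iterate_succ_apply']
          rw [e1, hen n]
          exact hRne _ _
      have htel : ∀ N, ∑ n ∈ Finset.range N, ‖d n - e n‖ ^ 2 + ‖R^[N] z - R^[N] y‖ ^ 2
          ≤ ‖z - y‖ ^ 2 := by
        intro N
        induction N with
        | zero => simp
        | succ N ih =>
          rw [Finset.sum_range_succ]
          have h := hkey2 (R^[N] z) (R^[N] y)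
          have e1 : R (R^[N] z) = R^[N+1] z := (Function.iterate_succ_apply' R N z).symm
          have e2 : R (R^[N] y) = R^[N+1] y := (Function.iterate_succ_apply' R N y).symm
          rw [e1, e2] at h
          have e3 : (R^[N] z - R^[N+1] z) - (R^[N] y - R^[N+1] y) = d N - e N := by
            rw [hdn N, hen N]
          rw [e3] at h
          linarith
      obtain ⟨N, hN⟩ := exists_nat_gt (‖z - y‖ ^ 2 / (ε / 2) ^ 2)
      have hex : ∃ n, ‖d n - e n‖ ^ 2 < (ε / 2) ^ 2 := by
        by_contra hcon
        push_neg at hcon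
        have hlow : (N : ℝ) * (ε / 2) ^ 2 ≤ ∑ n ∈ Finset.range N, ‖d n - e n‖ ^ 2 := by
          calc (N : ℝ) * (ε / 2) ^ 2 = ∑ _n ∈ Finset.range N, (ε / 2) ^ 2 := by
                rw [Finset.sum_const, Finset.card_range, nsmul_eq_mul]
            _ ≤ _ := Finset.sum_le_sum fun n _ => hcon n
        have := htel N
        have hzN : (N : ℝ) * (ε / 2) ^ 2 ≤ ‖z - y‖ ^ 2 := by
          nlinarith [sq_nonneg ‖R^[N] z - R^[N] y‖]
        rw [div_lt_iff₀ (by positivity)] at hN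
        nlinarith
      obtain ⟨n, hn⟩ := hex
      refine ⟨n, ?_⟩
      have h1 : ‖d n - e n‖ < ε / 2 := by
        nlinarith [norm_nonneg (d n - e n)]
      calc ‖d n‖ = ‖(d n - e n) + e n‖ := by rw [sub_add_cancel]
        _ ≤ ‖d n - e n‖ + ‖e n‖ := norm_add_le _ _
        _ < ε / 2 + ε / 2 := by
            apply add_lt_add_of_lt_of_le h1 (le_trans (he n) hy.le)
        _ = ε := by ring
    rw [NormedAddCommGroup.tendsto_nhds_zero]
    intro ε hε
    obtain ⟨n0, hn0⟩ := hsmall ε hε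
    filter_upwards [eventually_ge_atTop n0] with n hn
    exact lt_of_le_of_lt (hdanti' hn) hn0
  -- Step: reduction from product space
  intro x
  set z : X := ∑ j, lam j • T j (x j) with hzdef
  have hiter : ∀ n, (Q ∘ Tb)^[n+1] x = WithLp.toLp 2 (fun _ => R^[n] z) := by
    intro n
    induction n with
    | zero =>
      ext i
      show (Q ∘ Tb)^[1] x i = z
      simp only [Function.iterate_one, Function.comp_apply]
      rw [hQ]
      apply Finset.sum_congr rfl
      intro j _
      rw [hTb]
    | succ n ih =>
      rw [Function.iterate_succ_apply', ih]
      ext i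
      show (Q ∘ Tb) (WithLp.toLp 2 (fun _ => R^[n] z)) i = R^[n+1] z
      simp only [Function.comp_apply]
      rw [hQ, Function.iterate_succ_apply']
      have h5 : R (R^[n] z) = ∑ j, lam j • T j (R^[n] z) := hRdef _
      rw [h5]
      exact Finset.sum_congr rfl fun j _ => by rw [hTb]
  rw [← Filter.tendsto_add_atTop_iff_nat 1]
  have heq : (fun n : ℕ => (Q ∘ Tb)^[n+1] x - (Q ∘ Tb)^[n+1+1] x)
      = fun n : ℕ => (WithLp.toLp 2 (fun _ => R^[n] z - R^[n+1] z) : PiLp 2 (fun _ : Fin m => X)) := by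
    funext n
    rw [hiter n, hiter (n+1)]
    rfl
  rw [heq]
  -- the constant embedding is continuous
  have hJ : Continuous (fun v : X => (WithLp.toLp 2 (fun _ => v) : PiLp 2 (fun _ : Fin m => X))) := by
    have h1 : Continuous (fun v : X => ((fun _ => v) : ∀ _ : Fin m, X)) :=
      continuous_pi fun _ => continuous_id
    exact ((PiLp.continuousLinearEquiv 2 ℝ (fun _ : Fin m => X)).symm.continuous).comp h1
  have h2 : Tendsto (fun n : ℕ =>
      (WithLp.toLp 2 (fun _ => R^[n] z - R^[n+1] z) : PiLp 2 (fun _ : Fin m => X))) atTop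
      (𝓝 (WithLp.toLp 2 (fun _ => (0:X)))) := (hJ.tendsto 0).comp (hasym z)
  exact h2
end

section
/- Let X be a real Hilbert space with X ≠ {0}, let m ≥ 2, let λ_1, …, λ_m ∈ (0,1) satisfy λ_1 + ⋯ + λ_m = 1, and define Q : X^m → X^m on the standard Hilbert product space X^m (with inner product ⟨x, y⟩ = Σ_{i=1}^m ⟨x_i, y_i⟩) by Q(x_1, …, x_m) = (x̄, …, x̄), where x̄ = Σ_{i=1}^m λ_i x_i. Then the following are equivalent: (i) λ_i = 1/m for every i; (ii) Q is firmly nonexpansive on X^m; (iii) Q is nonexpansive on X^m. -/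
open Filter Topology RealInnerProductSpace

theorem Q_nonexpansive_iff_uniform_weights
    {X : Type*} [NormedAddCommGroup X] [InnerProductSpace ℝ X] [CompleteSpace X]
    [Nontrivial X]
    {m : ℕ} (hm : 2 ≤ m)
    (lam : Fin m → ℝ) (hlam : ∀ i, lam i ∈ Set.Ioo (0 : ℝ) 1) (hsum : ∑ i, lam i = 1)
    (Q : PiLp 2 (fun _ : Fin m => X) → PiLp 2 (fun _ : Fin m => X))
    (hQ : ∀ x : PiLp 2 (fun _ : Fin m => X), ∀ i : Fin m, Q x i = ∑ j, lam j • x j) :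
    ((∀ i, lam i = 1 / m) ↔
        ∀ x y : PiLp 2 (fun _ : Fin m => X), ‖Q x - Q y‖ ^ 2 ≤ ⟪x - y, Q x - Q y⟫) ∧
      ((∀ i, lam i = 1 / m) ↔
        ∀ x y : PiLp 2 (fun _ : Fin m => X), ‖Q x - Q y‖ ≤ ‖x - y‖) := by
  have hm0 : (0:ℝ) < (m:ℝ) := by
    have : 0 < m := lt_of_lt_of_le (by norm_num) hm
    exact_mod_cast this
  -- (i) → (ii)
  have h1 : (∀ i, lam i = 1 / m) →
      ∀ x y : PiLp 2 (fun _ : Fin m => X), ‖Q x - Q y‖ ^ 2 ≤ ⟪x - y, Q x - Q y⟫ := by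
    intro hl x y
    set S : X := ∑ j, (x j - y j) with hS
    have hQxy : ∀ i, (Q x - Q y) i = (1/(m:ℝ)) • S := by
      intro i
      have h0 : (Q x - Q y) i = Q x i - Q y i := rfl
      rw [h0, hQ, hQ, ← Finset.sum_sub_distrib, hS, Finset.smul_sum]
      exact Finset.sum_congr rfl fun j _ => by rw [hl j, smul_sub]
    have hnorm : ‖Q x - Q y‖ ^ 2 = (1/(m:ℝ)) * ‖S‖^2 := by
      rw [PiLp.norm_sq_eq_of_L2]
      simp only [hQxy, norm_smul, mul_pow, Finset.sum_const, Finset.card_univ,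
        Fintype.card_fin, nsmul_eq_mul]
      rw [Real.norm_eq_abs, abs_of_pos (by positivity : (0:ℝ) < 1/(m:ℝ))]
      field_simp
    have hinner : ⟪x - y, Q x - Q y⟫ = (1/(m:ℝ)) * ‖S‖^2 := by
      rw [PiLp.inner_apply]
      have : ∀ i : Fin m, ⟪(x - y) i, (Q x - Q y) i⟫ = (1/(m:ℝ)) * ⟪x i - y i, S⟫ := by
        intro i
        rw [hQxy i]
        have : (x - y) i = x i - y i := rfl
        rw [this, real_inner_smul_right]
      rw [Finset.sum_congr rfl fun i _ => this i, ← Finset.mul_sum,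
        ← sum_inner, ← hS, real_inner_self_eq_norm_sq]
    rw [hnorm, hinner]
  -- (ii) → (iii)
  have h2 : (∀ x y : PiLp 2 (fun _ : Fin m => X), ‖Q x - Q y‖ ^ 2 ≤ ⟪x - y, Q x - Q y⟫) →
      ∀ x y : PiLp 2 (fun _ : Fin m => X), ‖Q x - Q y‖ ≤ ‖x - y‖ := by
    intro h x y
    have hfne := h x y
    have hcs := real_inner_le_norm (x - y) (Q x - Q y)
    nlinarith [norm_nonneg (Q x - Q y), norm_nonneg (x - y)]
  -- (iii) → (i)
  have h3 : (∀ x y : PiLp 2 (fun _ : Fin m => X), ‖Q x - Q y‖ ≤ ‖x - y‖) →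
      ∀ i, lam i = 1 / m := by
    intro h
    obtain ⟨v, hv⟩ := exists_ne (0 : X)
    set u : X := ‖v‖⁻¹ • v with hu
    have hu1 : ‖u‖ = 1 := norm_smul_inv_norm hv
    set s : ℝ := ∑ j, (lam j)^2 with hsdef
    set x : PiLp 2 (fun _ : Fin m => X) :=
      (WithLp.equiv 2 (∀ _ : Fin m, X)).symm (fun i => lam i • u) with hx
    have hxi : ∀ i, x i = lam i • u := fun i => rfl
    have hQx : ∀ i, Q x i = s • u := by
      intro i
      rw [hQ]
      have : ∀ j : Fin m, lam j • x j = (lam j)^2 • u := by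
        intro j; rw [hxi, smul_smul, sq]
      rw [Finset.sum_congr rfl fun j _ => this j, ← Finset.sum_smul]
    have hQ0 : ∀ i, Q (0 : PiLp 2 (fun _ : Fin m => X)) i = 0 := by
      intro i
      rw [hQ]
      simp
    have hle := h x 0
    have hnQ : ‖Q x - Q 0‖^2 = (m:ℝ) * s^2 := by
      rw [PiLp.norm_sq_eq_of_L2]
      have : ∀ i : Fin m, ‖(Q x - Q 0) i‖^2 = s^2 := by
        intro i
        have h0 : (Q x - Q 0) i = Q x i - Q 0 i := rfl
        rw [h0, hQx, hQ0, sub_zero, norm_smul, hu1, mul_one, Real.norm_eq_abs, sq_abs]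
      rw [Finset.sum_congr rfl fun i _ => this i]
      simp
    have hnx : ‖x - 0‖^2 = s := by
      rw [sub_zero, PiLp.norm_sq_eq_of_L2]
      have : ∀ i : Fin m, ‖x i‖^2 = (lam i)^2 := by
        intro i
        rw [hxi, norm_smul, hu1, mul_one, Real.norm_eq_abs, sq_abs]
      rw [Finset.sum_congr rfl fun i _ => this i, hsdef]
    have hspos : 0 < s := by
      rw [hsdef]
      apply Finset.sum_pos
      · intro i _
        exact pow_pos (hlam i).1 2
      · exact ⟨⟨0, by omega⟩, Finset.mem_univ _⟩
    have hsq : (m:ℝ) * s^2 ≤ s := by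
      have := pow_le_pow_left₀ (norm_nonneg _) hle 2
      rwa [hnQ, hnx] at this
    have hs_le : s ≤ 1 / m := by
      rw [le_div_iff₀ hm0]
      nlinarith
    have hkey : ∑ i, (lam i - 1/(m:ℝ))^2 = s - 1/m := by
      have hexp : ∀ i : Fin m, (lam i - 1/(m:ℝ))^2
          = (lam i)^2 - (2/m) * lam i + (1/m)^2 := by
        intro i; ring
      rw [Finset.sum_congr rfl fun i _ => hexp i, Finset.sum_add_distrib,
        Finset.sum_sub_distrib, ← Finset.mul_sum, hsum, ← hsdef]
      simp only [Finset.sum_const, Finset.card_univ, Fintype.card_fin, nsmul_eq_mul]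
      field_simp
      ring
    have hzero : ∑ i, (lam i - 1/(m:ℝ))^2 = 0 := by
      have hle0 : ∑ i, (lam i - 1/(m:ℝ))^2 ≤ 0 := by rw [hkey]; linarith
      have hge0 : 0 ≤ ∑ i, (lam i - 1/(m:ℝ))^2 :=
        Finset.sum_nonneg fun i _ => sq_nonneg _
      linarith
    intro i
    have := (Finset.sum_eq_zero_iff_of_nonneg
      (fun i _ => sq_nonneg (lam i - 1/(m:ℝ)))).mp hzero i (Finset.mem_univ i)
    have := pow_eq_zero_iff (n := 2) (by norm_num) |>.mp this
    linarith [sub_eq_zero.mp this]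
  exact ⟨⟨h1, fun h => h3 (h2 h)⟩, ⟨fun h => h2 (h1 h), h3⟩⟩
end
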